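/- arXiv:2504.03070 — 2 statements merged into one kernel-verified Lean document; each statement's English description precedes it below -/
import Mathlib

section
/- Let A be an n×n real matrix with nonnegative off-diagonal entries and columns summing to zero (a CME generator). Then for every t ≥ 0, the matrix exponential exp(tA) has nonnegative entries. -/
/-!
A matrix with nonnegative off-diagonal entries becomes entrywise nonnegative after adding a
large enough multiple `c • 1` of the identity. Since `c • 1` is central,
`exp A = exp (-c) • exp (A + c • 1)`, and the exponential series of an entrywise nonnegative
matrix has entrywise nonnegative terms.
-/

open Finset

namespace Matrix

variable {ι : Type*}

def IsMetzler {α : Type*} [Zero α] [LE α] (A : Matrix ι ι α) : Prop :=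
  ∀ i j, i ≠ j → 0 ≤ A i j

theorem IsMetzler.smul {A : Matrix ι ι ℝ} (hA : A.IsMetzler) {t : ℝ} (ht : 0 ≤ t) :
    (t • A).IsMetzler :=
  fun i j hij => mul_nonneg ht (hA i j hij)

variable [Fintype ι] [DecidableEq ι]

theorem exp_apply_nonneg {B : Matrix ι ι ℝ} (hB : ∀ i j, 0 ≤ B i j) (i j : ι) :
    0 ≤ NormedSpace.exp B i j := by
  -- Stated in `ι → ι → ℝ`, whose order lets `tsum_nonneg` apply without any summability.
  have hsum : (0 : ι → ι → ℝ) ≤ ∑' k : ℕ, (show ι → ι → ℝ from (k.factorial : ℝ)⁻¹ • B ^ k) :=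
    tsum_nonneg fun k i j => mul_nonneg (by positivity) (pow_apply_nonneg hB k i j)
  rw [NormedSpace.exp_eq_tsum ℝ]
  exact hsum i j

theorem exp_add_smul_one (B : Matrix ι ι ℝ) (c : ℝ) :
    NormedSpace.exp (B + c • 1) = Real.exp c • NormedSpace.exp B := by
  rw [exp_add_of_commute _ _ ((Commute.one_right B).smul_right c), smul_one_eq_diagonal,
    exp_diagonal, Pi.exp_def, Real.exp_eq_exp_ℝ, ← smul_one_eq_diagonal, mul_smul_one]

namespace IsMetzler

variable {A : Matrix ι ι ℝ}

theorem add_smul_one_apply_nonneg (hA : A.IsMetzler) (i j : ι) :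
    0 ≤ (A + (∑ k, |A k k|) • 1) i j := by
  rcases eq_or_ne i j with rfl | hij
  · have hdiag : |A i i| ≤ ∑ k, |A k k| :=
      single_le_sum (f := fun k => |A k k|) (fun k _ => abs_nonneg _) (mem_univ i)
    simp only [add_apply, smul_apply, one_apply_eq, smul_eq_mul, mul_one]
    linarith [neg_abs_le (A i i)]
  · simpa [one_apply_ne hij] using hA i j hij

theorem exp_apply_nonneg (hA : A.IsMetzler) (i j : ι) : 0 ≤ NormedSpace.exp A i j := by
  set c := ∑ k, |A k k|
  have hshift : A = (A + c • 1) + (-c) • 1 := by rw [neg_smul, add_neg_cancel_right]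
  rw [hshift, exp_add_smul_one, smul_apply, smul_eq_mul]
  exact mul_nonneg (Real.exp_pos _).le (Matrix.exp_apply_nonneg hA.add_smul_one_apply_nonneg i j)

end IsMetzler

end Matrix

theorem cme_generator_exp_nonneg_general
    {n : ℕ} (A : Matrix (Fin n) (Fin n) ℝ)
    (hoff : ∀ i j, i ≠ j → 0 ≤ A i j)
    (t : ℝ) (ht : 0 ≤ t) :
    ∀ i j, 0 ≤ (NormedSpace.exp (t • A)) i j :=
  (Matrix.IsMetzler.smul hoff ht).exp_apply_nonneg

theorem cme_generator_exp_nonneg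
    {n : ℕ} (A : Matrix (Fin n) (Fin n) ℝ)
    (hoff : ∀ i j, i ≠ j → 0 ≤ A i j)
    (hcol : ∀ j, ∑ i, A i j = 0)
    (t : ℝ) (ht : 0 ≤ t) :
    ∀ i j, 0 ≤ (NormedSpace.exp (t • A)) i j :=
  cme_generator_exp_nonneg_general A hoff t ht
end

section
/- Let A be a CME generator (nonnegative off-diagonals, zero column sums). Then for every t ≥ 0 and every vector v with nonnegative entries, ‖exp(tA) v‖₁ = ‖v‖₁. -/
/-!
`exp (t • A)` is column-stochastic. Its column sums are `1` because `1 ᵥ* A = 0` annihilates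
every term of the exponential series but the first. Its entries are nonnegative because
`c • 1 + t • A` is entrywise nonnegative for `c` large, so all its powers are, and
`exp (t • A) = Real.exp (-c) • exp (c • 1 + t • A)`. A column-stochastic matrix preserves the
total mass of a nonnegative vector.
-/

open Finset

namespace NormedSpace

theorem mul_exp_eq_self_of_mul_eq_zero {𝔸 : Type*} [NormedRing 𝔸] [NormedAlgebra ℚ 𝔸]
    [CompleteSpace 𝔸] {a b : 𝔸} (h : a * b = 0) : a * exp b = a := by
  have hterm : ∀ k ≠ 0, a * ((k.factorial⁻¹ : ℚ) • b ^ k) = 0 := by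
    rintro (_ | k) hk
    · exact absurd rfl hk
    · rw [mul_smul_comm, pow_succ', ← mul_assoc, h, zero_mul, smul_zero]
  refine ((exp_series_hasSum_exp' (𝕂 := ℚ) b).mul_left a).unique ?_
  simpa using hasSum_single 0 hterm

end NormedSpace

namespace Matrix

open NormedSpace

variable {ι : Type*} [Fintype ι] [DecidableEq ι]

theorem vecMul_exp_eq_self_of_vecMul_eq_zero {M : Matrix ι ι ℝ} {x : ι → ℝ} (h : x ᵥ* M = 0) :
    x ᵥ* exp M = x := by
  have hrow : ∀ N : Matrix ι ι ℝ, replicateRow ι x * N = replicateRow ι (x ᵥ* N) := by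
    intro N
    ext i j
    simp [mul_apply, vecMul, dotProduct]
  have hM : replicateRow ι x * M = 0 := by rw [hrow M, h, replicateRow_zero]
  have hexp := open scoped Norms.Operator in mul_exp_eq_self_of_mul_eq_zero hM
  rw [hrow] at hexp
  funext j
  exact congrFun (congrFun hexp j) j

theorem exp_apply_nonneg_s9 {M : Matrix ι ι ℝ} (hM : ∀ i j, 0 ≤ M i j) (i j : ι) :
    0 ≤ exp M i j := by
  have hseries := open scoped Norms.Operator in exp_series_hasSum_exp' (𝕂 := ℝ) M
  exact (Pi.hasSum.1 (Pi.hasSum.1 hseries i) j).nonneg fun k =>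
    mul_nonneg (by positivity) (pow_apply_nonneg hM k i j)

theorem exp_algebraMap_add (c : ℝ) (M : Matrix ι ι ℝ) :
    exp (algebraMap ℝ _ c + M) = Real.exp c • exp M := by
  rw [exp_add_of_commute _ _ (Algebra.commutes c M), Real.exp_eq_exp_ℝ, Algebra.smul_def]
  congr 1
  exact (open scoped Norms.Operator in algebraMap_exp_comm (𝔸 := Matrix ι ι ℝ) c).symm

theorem exp_apply_nonneg_of_offDiag_nonneg {M : Matrix ι ι ℝ}
    (hM : ∀ i j, i ≠ j → 0 ≤ M i j) (i j : ι) : 0 ≤ exp M i j := by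
  set c := ∑ k, |M k k|
  have hshift : ∀ i j, 0 ≤ (algebraMap ℝ _ c + M) i j := by
    intro i j
    rcases eq_or_ne i j with rfl | hij
    · have hc : |M i i| ≤ c := single_le_sum (fun k _ => abs_nonneg (M k k)) (mem_univ i)
      simp only [add_apply, algebraMap_matrix_apply, if_true, Algebra.algebraMap_self,
        RingHom.id_apply]
      linarith [neg_abs_le (M i i)]
    · simpa [algebraMap_matrix_apply, hij] using hM i j hij
  have hexp := exp_apply_nonneg_s9 hshift i j
  rw [exp_algebraMap_add, smul_apply, smul_eq_mul] at hexp
  exact (mul_nonneg_iff_of_pos_left (Real.exp_pos c)).1 hexp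

end Matrix

open Matrix in
theorem cme_exp_preserves_l1_of_nonneg
    {n : ℕ} (A : Matrix (Fin n) (Fin n) ℝ)
    (hoff : ∀ i j, i ≠ j → 0 ≤ A i j)
    (hcol : ∀ j, ∑ i, A i j = 0)
    (t : ℝ) (ht : 0 ≤ t)
    (v : Fin n → ℝ) (hv : ∀ i, 0 ≤ v i) :
    ∑ i, |(NormedSpace.exp (t • A)).mulVec v i| = ∑ i, |v i| := by
  set E := NormedSpace.exp (t • A)
  have hE : ∀ i j, 0 ≤ E i j :=
    exp_apply_nonneg_of_offDiag_nonneg fun i j hij => mul_nonneg ht (hoff i j hij)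
  have hEv : ∀ i, 0 ≤ (E *ᵥ v) i := fun i =>
    sum_nonneg (s := univ) fun j _ => mul_nonneg (hE i j) (hv j)
  have hcolE : 1 ᵥ* E = 1 := vecMul_exp_eq_self_of_vecMul_eq_zero <| by
    ext j
    simp [vecMul, dotProduct, ← mul_sum, hcol]
  calc ∑ i, |(E *ᵥ v) i| = 1 ⬝ᵥ (E *ᵥ v) := by simp [one_dotProduct, abs_of_nonneg (hEv _)]
    _ = (1 ᵥ* E) ⬝ᵥ v := dotProduct_mulVec _ _ _
    _ = ∑ i, |v i| := by simp [hcolE, one_dotProduct, abs_of_nonneg (hv _)]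
end
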